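/- Let (C, C₋, C₊) be a Reedy category. Then the pair (Γ₋, Γ₊) is a Reedy structure on ∫N^{-,+}(C); that is, every morphism of ∫N^{-,+}(C) factors uniquely as a morphism of Γ₋ followed by a morphism of Γ₊, and the relation on objects of ∫N^{-,+}(C) given by P <' Q iff there exists a non-identity morphism P → Q in Γ₊ or a non-identity morphism Q → P in Γ₋ is well-founded. -/

import Mathlib

/-!
A morphism `(α, θ) : ([m], X) → ([n], Y)` factors through the image of `α`: write
`α = δ ∘ σ` with `σ` surjective and `δ` injective, pick a monotone section `s` of `σ`, and take
`X ∘ s` as middle object. This works because `X` is constant on the fibres of `σ`: when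
`α i = α j`, naturality makes `X(i ≤ j) ≫ θⱼ` a `(C₋, C₊)`-factorization of `θᵢ`, so uniqueness
of Reedy factorizations in `C` forces `X(i ≤ j)` to be an identity. For uniqueness: in any
`(Γ₋, Γ₊)`-factorization the simplicial parts are the image factorization of `α`, a
`Γ₋`-morphism is determined by its simplicial part, and `Γ₋`-morphisms are epimorphisms.

For well-foundedness, order objects by length and then lexicographically by `<'` on their
entries. A non-identity `Γ₋`-morphism strictly shortens the chain; a non-identity `Γ₊`-morphism
either lengthens it, or has `α = id` and components in `C₊`, not all identities, which
lower the entries with respect to `<'`.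
-/

namespace ReedyPaper

open CategoryTheory

universe v₂ u₂ v₁ u₁ v u

variable {C : Type u} [Category.{v} C]

def IsIdMor {x y : C} (f : x ⟶ y) : Prop := ∃ h : x = y, f = eqToHom h

structure ReedyStruct (C : Type u) [Category.{v} C] where
  neg : MorphismProperty C
  pos : MorphismProperty C
  neg_id : ∀ x : C, neg (𝟙 x)
  pos_id : ∀ x : C, pos (𝟙 x)
  neg_comp : ∀ {x y z : C} (f : x ⟶ y) (g : y ⟶ z), neg f → neg g → neg (f ≫ g)
  pos_comp : ∀ {x y z : C} (f : x ⟶ y) (g : y ⟶ z), pos f → pos g → pos (f ≫ g)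
  factor_existsUnique : ∀ {x y : C} (f : x ⟶ y),
    ∃! t : Σ z : C, (x ⟶ z) × (z ⟶ y), neg t.2.1 ∧ pos t.2.2 ∧ t.2.1 ≫ t.2.2 = f
  wf : WellFounded (fun x y : C =>
    (∃ f : x ⟶ y, pos f ∧ ¬ IsIdMor f) ∨ (∃ f : y ⟶ x, neg f ∧ ¬ IsIdMor f))

structure ChainObj (C : Type u) [Category.{v} C] where
  n : ℕ
  X : Fin (n + 1) ⥤ C

structure ChainHom (P Q : ChainObj C) where
  α : Fin (P.n + 1) →o Fin (Q.n + 1)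
  θ : ∀ i : Fin (P.n + 1), P.X.obj i ⟶ Q.X.obj (α i)
  natural : ∀ {i j : Fin (P.n + 1)} (h : i ≤ j),
    P.X.map (homOfLE h) ≫ θ j = θ i ≫ Q.X.map (homOfLE (α.monotone h))

theorem ChainHom.ext' {P Q : ChainObj C} {f g : ChainHom P Q}
    (hα : f.α = g.α) (hθ : HEq f.θ g.θ) : f = g := by
  cases f; cases g; cases hα; cases hθ; rfl

def ChainHom.id (P : ChainObj C) : ChainHom P P where
  α := OrderHom.id
  θ i := 𝟙 _
  natural h := (Category.comp_id _).trans (Category.id_comp _).symm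

def ChainHom.comp {P Q S : ChainObj C} (f : ChainHom P Q) (g : ChainHom Q S) :
    ChainHom P S where
  α := g.α.comp f.α
  θ i := f.θ i ≫ g.θ (f.α i)
  natural {i j} h := by
    show P.X.map (homOfLE h) ≫ f.θ j ≫ g.θ (f.α j) =
      (f.θ i ≫ g.θ (f.α i)) ≫ S.X.map (homOfLE (g.α.monotone (f.α.monotone h)))
    rw [← Category.assoc, f.natural h, Category.assoc, g.natural (f.α.monotone h),
      ← Category.assoc]

instance : Category (ChainObj C) where
  Hom := ChainHom
  id := ChainHom.id
  comp := ChainHom.comp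
  id_comp f := ChainHom.ext' rfl (heq_of_eq (funext fun i => Category.id_comp _))
  comp_id f := ChainHom.ext' rfl (heq_of_eq (funext fun i => Category.comp_id _))
  assoc f g h := ChainHom.ext' rfl (heq_of_eq (funext fun i => Category.assoc _ _ _))

/-- The partial order on the hom-sets of `∫N(C)` (and of `∫N^{-,+}(C)`):
`(α, θ) ≤ (α', θ')` iff `α ≤ α'` pointwise and `θ'ᵢ = Y(α(i) ≤ α'(i)) ∘ θᵢ` for all `i`. -/
def ChainHom.le {P Q : ChainObj C} (f g : ChainHom P Q) : Prop :=
  (∀ i, f.α i ≤ g.α i) ∧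
    ∀ (i : Fin (P.n + 1)) (h : f.α i ≤ g.α i), g.θ i = f.θ i ≫ Q.X.map (homOfLE h)

theorem ChainHom.le_comp_right {P Q S : ChainObj C} {f f' : P ⟶ Q} (g : Q ⟶ S)
    (h : ChainHom.le f f') : ChainHom.le (f ≫ g) (f' ≫ g) := by
  refine ⟨fun i => g.α.monotone (h.1 i), fun i hi => ?_⟩
  show f'.θ i ≫ g.θ (f'.α i) = (f.θ i ≫ g.θ (f.α i)) ≫ S.X.map (homOfLE hi)
  rw [h.2 i (h.1 i), Category.assoc, g.natural (h.1 i), ← Category.assoc]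
  rfl

theorem ChainHom.le_comp_left {P Q S : ChainObj C} (f : P ⟶ Q) {g g' : Q ⟶ S}
    (h : ChainHom.le g g') : ChainHom.le (f ≫ g) (f ≫ g') := by
  refine ⟨fun i => h.1 (f.α i), fun i hi => ?_⟩
  show f.θ i ≫ g'.θ (f.α i) = (f.θ i ≫ g.θ (f.α i)) ≫ S.X.map (homOfLE hi)
  rw [h.2 (f.α i) (h.1 (f.α i)), ← Category.assoc]
  rfl

/-- Objects of `∫N^{-,+}(C)`: chains all of whose morphisms lie in `C₋`. -/
structure NegObj (R : ReedyStruct C) where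
  n : ℕ
  X : Fin (n + 1) ⥤ C
  negMap : ∀ {i j : Fin (n + 1)} (h : i ≤ j), R.neg (X.map (homOfLE h))

variable {R : ReedyStruct C}

/-- The underlying object of `∫N(C)`. -/
def NegObj.chain (P : NegObj R) : ChainObj C := ⟨P.n, P.X⟩

/-- Morphisms of `∫N^{-,+}(C)`: morphisms of `∫N(C)` all of whose components lie in `C₊`. -/
def NegHomT (P Q : NegObj R) : Type v :=
  { f : P.chain ⟶ Q.chain // ∀ i, R.pos (f.θ i) }

def NegHomT.id (P : NegObj R) : NegHomT P P := ⟨𝟙 P.chain, fun _ => R.pos_id _⟩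

def NegHomT.comp {P Q S : NegObj R} (f : NegHomT P Q) (g : NegHomT Q S) : NegHomT P S :=
  ⟨f.1 ≫ g.1, fun i => by
    show R.pos (f.1.θ i ≫ g.1.θ (f.1.α i))
    exact R.pos_comp _ _ (f.2 i) (g.2 _)⟩

theorem NegHomT.id_comp {P Q : NegObj R} (f : NegHomT P Q) : (NegHomT.id P).comp f = f := by
  apply Subtype.ext
  show 𝟙 P.chain ≫ f.1 = f.1
  exact Category.id_comp f.1

theorem NegHomT.comp_id {P Q : NegObj R} (f : NegHomT P Q) : f.comp (NegHomT.id Q) = f := by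
  apply Subtype.ext
  show f.1 ≫ 𝟙 Q.chain = f.1
  exact Category.comp_id f.1

theorem NegHomT.comp_assoc {P Q S T : NegObj R} (f : NegHomT P Q) (g : NegHomT Q S)
    (h : NegHomT S T) : (f.comp g).comp h = f.comp (g.comp h) := by
  apply Subtype.ext
  show (f.1 ≫ g.1) ≫ h.1 = f.1 ≫ (g.1 ≫ h.1)
  exact Category.assoc f.1 g.1 h.1

/-- The category `∫N^{-,+}(C)`. -/
instance : Category (NegObj R) where
  Hom := NegHomT
  id := NegHomT.id
  comp := NegHomT.comp
  id_comp := NegHomT.id_comp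
  comp_id := NegHomT.comp_id
  assoc := NegHomT.comp_assoc

/-- The order on the hom-sets of `∫N^{-,+}(C)`. -/
def NegHom.le {P Q : NegObj R} (f g : P ⟶ Q) : Prop := ChainHom.le f.1 g.1

/-- The equivalence relation `∼` on the hom-sets of `∫N^{-,+}(C)`: the
symmetric-transitive closure of `≤`. -/
def NegHom.equiv {P Q : NegObj R} (f g : P ⟶ Q) : Prop :=
  Relation.EqvGen (fun a b : P ⟶ Q => NegHom.le a b) f g

theorem NegHom.le_comp_right {P Q S : NegObj R} {f f' : P ⟶ Q} (g : Q ⟶ S)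
    (h : NegHom.le f f') : NegHom.le (f ≫ g) (f' ≫ g) :=
  ChainHom.le_comp_right g.1 h

theorem NegHom.le_comp_left {P Q S : NegObj R} (f : P ⟶ Q) {g g' : Q ⟶ S}
    (h : NegHom.le g g') : NegHom.le (f ≫ g) (f ≫ g') :=
  ChainHom.le_comp_left f.1 h

/-- Identity-reflectingness of a chain. -/
def NegObj.IdRefl (P : NegObj R) : Prop :=
  ∀ {i j : Fin (P.n + 1)} (h : i ≤ j), IsIdMor (P.X.map (homOfLE h)) → i = j

/-- Objects of `∫N^{--,+}_+(C)`: identity-reflecting chains in `C₋`. -/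
structure StrictObj (R : ReedyStruct C) where
  toNegObj : NegObj R
  idRefl : toNegObj.IdRefl

/-- Morphisms of `∫N^{--,+}_+(C)`: morphisms of `∫N^{-,+}(C)` with `α` injective. -/
def StrictHomT (P Q : StrictObj R) : Type v :=
  { f : P.toNegObj ⟶ Q.toNegObj // Function.Injective f.1.α }

def StrictHomT.id (P : StrictObj R) : StrictHomT P P :=
  ⟨𝟙 P.toNegObj, fun _ _ h => h⟩

def StrictHomT.comp {P Q S : StrictObj R} (f : StrictHomT P Q) (g : StrictHomT Q S) :
    StrictHomT P S :=
  ⟨f.1 ≫ g.1, fun _ _ h => f.2 (g.2 h)⟩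

/-- The category `∫N^{--,+}_+(C)`. -/
instance : Category (StrictObj R) where
  Hom := StrictHomT
  id := StrictHomT.id
  comp := StrictHomT.comp
  id_comp f := Subtype.ext (Category.id_comp f.1)
  comp_id f := Subtype.ext (Category.comp_id f.1)
  assoc f g h := Subtype.ext (Category.assoc f.1 g.1 h.1)

/-- The order on the hom-sets of `∫N^{--,+}_+(C)`. -/
def StrictHom.le {P Q : StrictObj R} (f g : P ⟶ Q) : Prop := NegHom.le f.1 g.1

/-- The equivalence relation `∼` on the hom-sets of `∫N^{--,+}_+(C)`. -/
def StrictHom.equiv {P Q : StrictObj R} (f g : P ⟶ Q) : Prop :=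
  Relation.EqvGen (fun a b : P ⟶ Q => StrictHom.le a b) f g

theorem StrictHom.le_comp_right {P Q S : StrictObj R} {f f' : P ⟶ Q} (g : Q ⟶ S)
    (h : StrictHom.le f f') : StrictHom.le (f ≫ g) (f' ≫ g) :=
  NegHom.le_comp_right g.1 h

theorem StrictHom.le_comp_left {P Q S : StrictObj R} (f : P ⟶ Q) {g g' : Q ⟶ S}
    (h : StrictHom.le g g') : StrictHom.le (f ≫ g) (f ≫ g') :=
  NegHom.le_comp_left f.1 h

/-- Objects of `Down_*(C)`: the same as those of `∫N^{-,+}(C)`. -/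
structure DownStar (R : ReedyStruct C) where
  obj : NegObj R

/-- The category `Down_*(C)`: hom-sets are the quotients of those of `∫N^{-,+}(C)`
by the symmetric-transitive closure of `≤`. -/
instance : Category (DownStar R) where
  Hom P Q := Quot (fun f g : P.obj ⟶ Q.obj => NegHom.le f g)
  id P := Quot.mk _ (𝟙 P.obj)
  comp {P Q S} f g :=
    Quot.lift
      (fun f' => Quot.lift (fun g' => Quot.mk _ (f' ≫ g'))
        (fun _ _ hg => Quot.sound (NegHom.le_comp_left f' hg)) g)
      (fun f₁ f₂ hf => Quot.inductionOn g (fun g' =>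
        Quot.sound (NegHom.le_comp_right g' hf))) f
  id_comp f := Quot.inductionOn f fun f' => congrArg (Quot.mk _) (Category.id_comp f')
  comp_id f := Quot.inductionOn f fun f' => congrArg (Quot.mk _) (Category.comp_id f')
  assoc f g h :=
    Quot.inductionOn f fun f' => Quot.inductionOn g fun g' => Quot.inductionOn h fun h' =>
      congrArg (Quot.mk _) (Category.assoc f' g' h')

/-- Objects of `Down(C)`: the same as those of `∫N^{--,+}_+(C)`. -/
structure Down (R : ReedyStruct C) where
  obj : StrictObj R

/-- The category `Down(C)`: hom-sets are the quotients of those of `∫N^{--,+}_+(C)`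
by the symmetric-transitive closure of `≤`. -/
instance : Category (Down R) where
  Hom P Q := Quot (fun f g : P.obj ⟶ Q.obj => StrictHom.le f g)
  id P := Quot.mk _ (𝟙 P.obj)
  comp {P Q S} f g :=
    Quot.lift
      (fun f' => Quot.lift (fun g' => Quot.mk _ (f' ≫ g'))
        (fun _ _ hg => Quot.sound (StrictHom.le_comp_left f' hg)) g)
      (fun f₁ f₂ hf => Quot.inductionOn g (fun g' =>
        Quot.sound (StrictHom.le_comp_right g' hf))) f
  id_comp f := Quot.inductionOn f fun f' => congrArg (Quot.mk _) (Category.id_comp f')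
  comp_id f := Quot.inductionOn f fun f' => congrArg (Quot.mk _) (Category.comp_id f')
  assoc f g h :=
    Quot.inductionOn f fun f' => Quot.inductionOn g fun g' => Quot.inductionOn h fun h' =>
      congrArg (Quot.mk _) (Category.assoc f' g' h')

/-- The quotient functor `∫N^{-,+}(C) → Down_*(C)`. -/
def qStar (R : ReedyStruct C) : NegObj R ⥤ DownStar R where
  obj P := ⟨P⟩
  map f := Quot.mk _ f
  map_id _ := rfl
  map_comp _ _ := rfl

/-- The inclusion functor `Down(C) → Down_*(C)`. -/
def downInclusion (R : ReedyStruct C) : Down R ⥤ DownStar R where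
  obj P := ⟨P.obj.toNegObj⟩
  map {P Q} f :=
    Quot.lift (fun f' : P.obj ⟶ Q.obj => Quot.mk _ f'.1) (fun _ _ h => Quot.sound h) f
  map_id _ := rfl
  map_comp {P Q S} f g := by
    induction f using Quot.ind
    induction g using Quot.ind
    rfl

/-- The last-component functor `∫N(C) → C`. -/
def lastChain : ChainObj C ⥤ C where
  obj P := P.X.obj (Fin.last P.n)
  map {P Q} f := f.θ (Fin.last P.n) ≫ Q.X.map (homOfLE (Fin.le_last (f.α (Fin.last P.n))))
  map_id P := by
    show 𝟙 (P.X.obj (Fin.last P.n)) ≫ P.X.map (homOfLE (Fin.le_last (Fin.last P.n))) = 𝟙 _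
    rw [Category.id_comp]
    exact P.X.map_id _
  map_comp {P Q S} f g := by
    show (f.θ (Fin.last P.n) ≫ g.θ (f.α (Fin.last P.n))) ≫
        S.X.map (homOfLE (Fin.le_last (g.α (f.α (Fin.last P.n))))) =
      (f.θ (Fin.last P.n) ≫ Q.X.map (homOfLE (Fin.le_last (f.α (Fin.last P.n))))) ≫
        g.θ (Fin.last Q.n) ≫ S.X.map (homOfLE (Fin.le_last (g.α (Fin.last Q.n))))
    rw [Category.assoc, Category.assoc, ← Category.assoc (Q.X.map _),
      g.natural (Fin.le_last (f.α (Fin.last P.n))), Category.assoc, ← Functor.map_comp,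
      homOfLE_comp]

theorem lastChain_eq_of_le {P Q : ChainObj C} {f g : P ⟶ Q} (h : ChainHom.le f g) :
    lastChain.map f = lastChain.map g := by
  show f.θ (Fin.last P.n) ≫ Q.X.map (homOfLE (Fin.le_last (f.α (Fin.last P.n)))) =
    g.θ (Fin.last P.n) ≫ Q.X.map (homOfLE (Fin.le_last (g.α (Fin.last P.n))))
  rw [h.2 (Fin.last P.n) (h.1 (Fin.last P.n)), Category.assoc, ← Functor.map_comp,
    homOfLE_comp]

/-- The forgetful functor `∫N^{-,+}(C) → ∫N(C)`. -/
def negForget (R : ReedyStruct C) : NegObj R ⥤ ChainObj C where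
  obj P := P.chain
  map f := f.1
  map_id _ := rfl
  map_comp _ _ := rfl

/-- The last-component functor `∫N^{-,+}(C) → C`. -/
def lastNeg (R : ReedyStruct C) : NegObj R ⥤ C := negForget R ⋙ lastChain

/-- The forgetful functor `∫N^{--,+}_+(C) → ∫N^{-,+}(C)`. -/
def strictForget (R : ReedyStruct C) : StrictObj R ⥤ NegObj R where
  obj P := P.toNegObj
  map f := f.1
  map_id _ := rfl
  map_comp _ _ := rfl

/-- The last-component functor `∫N^{--,+}_+(C) → C`. -/
def lastStrict (R : ReedyStruct C) : StrictObj R ⥤ C := strictForget R ⋙ lastNeg R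

/-- The last-component functor `Down_*(C) → C`. -/
def lastDownStar (R : ReedyStruct C) : DownStar R ⥤ C where
  obj P := (lastNeg R).obj P.obj
  map {P Q} f :=
    Quot.lift (fun f' : P.obj ⟶ Q.obj => (lastNeg R).map f')
      (fun _ _ h => lastChain_eq_of_le h) f
  map_id P := (lastNeg R).map_id P.obj
  map_comp {P Q S} f g := by
    induction f using Quot.ind
    induction g using Quot.ind
    exact (lastNeg R).map_comp _ _

/-- The last-component functor `Down(C) → C`. -/
def lastDown (R : ReedyStruct C) : Down R ⥤ C where
  obj P := (lastStrict R).obj P.obj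
  map {P Q} f :=
    Quot.lift (fun f' : P.obj ⟶ Q.obj => (lastStrict R).map f')
      (fun _ _ h => lastChain_eq_of_le h) f
  map_id P := (lastStrict R).map_id P.obj
  map_comp {P Q S} f g := by
    induction f using Quot.ind
    induction g using Quot.ind
    exact (lastStrict R).map_comp _ _

/-- The wide subcategory `Γ₋` of `∫N^{-,+}(C)`: morphisms of the form
`(σ, id) : ([m], X ∘ σ) → ([n], X)` with `σ` surjective, i.e. morphisms whose simplicial
component is surjective and all of whose components are identities. -/
def GammaNeg (R : ReedyStruct C) {P Q : NegObj R} (f : P ⟶ Q) : Prop :=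
  Function.Surjective f.1.α ∧ ∀ i, IsIdMor (f.1.θ i)

/-- The wide subcategory `Γ₊` of `∫N^{-,+}(C)`: morphisms `(δ, θ)` with `δ` injective. -/
def GammaPos (R : ReedyStruct C) {P Q : NegObj R} (f : P ⟶ Q) : Prop :=
  Function.Injective f.1.α

/-- Whiskering (precomposition) with `lastF` is bijective on natural transformations
between functors out of `C`. -/
def WhiskerUnique {Γ : Type u₁} [Category.{v₁} Γ] (lastF : Γ ⥤ C) : Prop :=
  ∀ {D : Type u₂} [Category.{v₂} D] (F G : C ⥤ D)
    (ε : lastF ⋙ F ⟶ lastF ⋙ G), ∃! ε' : F ⟶ G, Functor.whiskerLeft lastF ε' = ε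

/-- `lastF : Γ ⥤ C` is a weak 1-localization of `Γ` at the `last`-weak equivalences
(the morphisms sent by `lastF` to identities). -/
def IsWeakLocalizationAtLastWeq {Γ : Type u₁} [Category.{v₁} Γ] (lastF : Γ ⥤ C) : Prop :=
  (∀ {P Q : Γ} (f : P ⟶ Q), IsIdMor (lastF.map f) → IsIso (lastF.map f)) ∧
  (∀ {E : Type u₂} [Category.{v₂} E] (G : Γ ⥤ E),
    (∀ {P Q : Γ} (f : P ⟶ Q), IsIdMor (lastF.map f) → IsIso (G.map f)) →
    ∃ H : C ⥤ E, Nonempty (lastF ⋙ H ≅ G)) ∧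
  (∀ {E : Type u₂} [Category.{v₂} E] (H H' : C ⥤ E) (θ : lastF ⋙ H ≅ lastF ⋙ H'),
    ∃! θ' : H ≅ H', Functor.isoWhiskerLeft lastF θ' = θ)


theorem _root_.Pi.lex_of_forall_eq_or {ι α : Type*} [LinearOrder ι] [WellFoundedLT ι]
    {r : α → α → Prop} {v w : ι → α} (hle : ∀ i, v i = w i ∨ r (v i) (w i)) (hne : v ≠ w) :
    Pi.Lex (· < ·) (fun {_} => r) v w := by
  obtain ⟨i, hi, hmin⟩ := wellFounded_lt.has_min {i | v i ≠ w i} (Function.ne_iff.mp hne)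
  exact ⟨i, fun j hj => not_not.mp fun hj' => hmin j hj' hj, (hle i).resolve_left hi⟩

theorem _root_.Monotone.exists_le_of_surjective {ι β : Type*} [LinearOrder ι] [PartialOrder β]
    {σ : ι → β} (hσ : Monotone σ) (hsurj : Function.Surjective σ) {a b : β} (hab : a ≤ b) :
    ∃ i j, i ≤ j ∧ σ i = a ∧ σ j = b := by
  obtain ⟨i, rfl⟩ := hsurj a
  obtain ⟨j, rfl⟩ := hsurj b
  rcases le_total i j with hij | hji
  · exact ⟨i, j, hij, rfl, rfl⟩
  · exact ⟨i, i, le_rfl, rfl, le_antisymm hab (hσ hji)⟩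

theorem _root_.Fin.eq_of_surjective_comp_injective {ι β : Type*} [LinearOrder β] {m m' : ℕ}
    {σ : ι → Fin m} {σ' : ι → Fin m'} {δ : Fin m →o β} {δ' : Fin m' →o β}
    (hσ : Function.Surjective σ) (hσ' : Function.Surjective σ')
    (hδ : Function.Injective δ) (hδ' : Function.Injective δ') (h : ∀ i, δ (σ i) = δ' (σ' i)) :
    m = m' ∧ ∀ i, (σ i : ℕ) = σ' i := by
  have hrange : Set.range δ = Set.range δ' := by
    rw [← hσ.range_comp, ← hσ'.range_comp]
    exact congrArg Set.range (funext h)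
  obtain rfl : m = m' := by
    simpa [Set.card_range_of_injective hδ, Set.card_range_of_injective hδ'] using
      congrArg (fun s : Set β => Nat.card s) hrange
  obtain rfl := (OrderHom.range_eq_iff hδ hδ').mp hrange
  exact ⟨rfl, fun i => congrArg Fin.val (hδ (h i))⟩

/-- The surjection `σ` is the corestriction of `α` to its image, and `s` picks the largest
point of each fibre. -/
theorem _root_.OrderHom.exists_image_factorization {ι β : Type*} [Fintype ι] [LinearOrder ι]
    [Nonempty ι] [LinearOrder β] (α : ι →o β) :
    ∃ (k : ℕ) (σ : ι →o Fin (k + 1)) (s : Fin (k + 1) →o ι),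
      (∀ i, i ≤ s (σ i)) ∧ (∀ a, σ (s a) = a) ∧ (∀ i, α (s (σ i)) = α i) ∧
        Function.Injective (α ∘ s) := by
  classical
  set S := Finset.univ.image α
  have hmem : ∀ i, α i ∈ S := fun i => Finset.mem_image_of_mem α (Finset.mem_univ i)
  obtain ⟨k, hk⟩ : ∃ k, S.card = k + 1 :=
    Nat.exists_eq_succ_of_ne_zero (Finset.card_pos.mpr ⟨_, hmem (Classical.arbitrary ι)⟩).ne'
  let e := S.orderIsoOfFin hk
  let σ : ι →o Fin (k + 1) := ⟨fun i => e.symm ⟨α i, hmem i⟩, fun i j hij => e.symm.monotone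
    (Subtype.mk_le_mk.mpr (α.monotone hij))⟩
  have heσ : ∀ i, (e (σ i) : β) = α i := fun i => congrArg Subtype.val (e.apply_symm_apply _)
  have hfibre : ∀ a, (Finset.univ.filter fun i => α i = e a).Nonempty := fun a => by
    obtain ⟨i, -, hi⟩ := Finset.mem_image.mp (e a).2
    exact ⟨i, Finset.mem_filter.mpr ⟨Finset.mem_univ i, hi⟩⟩
  let s₀ : Fin (k + 1) → ι := fun a => (Finset.univ.filter fun i => α i = e a).max' (hfibre a)
  have hαs : ∀ a, α (s₀ a) = e a := fun a =>
    (Finset.mem_filter.mp (Finset.max'_mem _ (hfibre a))).2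
  have hσs : ∀ a, σ (s₀ a) = a := fun a => e.symm_apply_eq.mpr (Subtype.ext (hαs a))
  have hs : Monotone s₀ := fun a b hab => by
    by_contra! hba
    have := σ.monotone hba.le
    rw [hσs, hσs] at this
    exact hba.ne (congrArg s₀ (le_antisymm hab this).symm)
  refine ⟨k, σ, ⟨s₀, hs⟩, fun i => Finset.le_max' _ i ?_, hσs, fun i => ?_, fun a b hab => ?_⟩
  · exact Finset.mem_filter.mpr ⟨Finset.mem_univ i, (heσ i).symm⟩
  · exact (hαs _).trans (heσ i)
  · exact e.injective (Subtype.ext ((hαs a).symm.trans (hab.trans (hαs b))))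

theorem isIdMor_id (x : C) : IsIdMor (𝟙 x) := ⟨rfl, rfl⟩

theorem isIdMor_of_sigma_eq {x y : C} {f : x ⟶ y}
    (h : (⟨y, f⟩ : Σ z, x ⟶ z) = ⟨x, 𝟙 x⟩) : IsIdMor f := by
  obtain ⟨rfl, hf⟩ := Sigma.mk.inj_iff.mp h
  exact ⟨rfl, eq_of_heq hf⟩

theorem heq_of_isIdMor {x y y' : C} {u : x ⟶ y} {v : x ⟶ y'} (hu : IsIdMor u)
    (hv : IsIdMor v) : u ≍ v := by
  obtain ⟨rfl, rfl⟩ := hu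
  obtain ⟨rfl, rfl⟩ := hv
  rfl

theorem map_homOfLE_eq_eqToHom {A : Type*} [Preorder A] (F : A ⥤ C) {a b : A} (h : a ≤ b)
    (e : a = b) : F.map (homOfLE h) = eqToHom (congrArg F.obj e) := by
  subst e
  simp

theorem ReedyStruct.pos_of_isIdMor {x y : C} {f : x ⟶ y} (hf : IsIdMor f) : R.pos f := by
  obtain ⟨rfl, rfl⟩ := hf
  exact R.pos_id x

theorem ReedyStruct.isIdMor_of_comp_eq_pos {x y z : C} {g : x ⟶ y} {h : y ⟶ z} {k : x ⟶ z}
    (hg : R.neg g) (hh : R.pos h) (hk : R.pos k) (w : g ≫ h = k) : IsIdMor g := by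
  obtain ⟨t, -, uniq⟩ := R.factor_existsUnique k
  have e := (uniq ⟨y, g, h⟩ ⟨hg, hh, w⟩).trans
    (uniq ⟨x, 𝟙 x, k⟩ ⟨R.neg_id x, hk, Category.id_comp k⟩).symm
  exact isIdMor_of_sigma_eq (congrArg (fun t => (⟨t.1, t.2.1⟩ : Σ z, x ⟶ z)) e)

theorem ChainHom.ext_heq {P Q : ChainObj C} {f g : ChainHom P Q} (hα : f.α = g.α)
    (hθ : ∀ i, f.θ i ≍ g.θ i) : f = g := by
  obtain ⟨fα, fθ, _⟩ := f
  obtain ⟨gα, gθ, _⟩ := g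
  cases hα
  exact ChainHom.ext' rfl (heq_of_eq (funext fun i => eq_of_heq (hθ i)))

theorem ChainHom.congr_θ {P Q : ChainObj C} {f g : ChainHom P Q} (h : f = g)
    (i : Fin (P.n + 1)) : f.θ i ≍ g.θ i := by
  cases h
  rfl

theorem ChainHom.eq_of_le {P Q : ChainObj C} {f g : ChainHom P Q} (h : ChainHom.le f g)
    (hα : ∀ i, f.α i = g.α i) : f = g := by
  refine ChainHom.ext_heq (OrderHom.ext _ _ (funext hα)) fun i => ?_
  rw [h.2 i (h.1 i), map_homOfLE_eq_eqToHom _ _ (hα i)]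
  exact (comp_eqToHom_heq _ _).symm

theorem NegHom.eq_of_le {P Q : NegObj R} {f g : P ⟶ Q} (h : NegHom.le f g)
    (hα : ∀ i, f.1.α i = g.1.α i) : f = g :=
  Subtype.ext (ChainHom.eq_of_le h hα)

/-- `f.1.natural` with `P.X` in place of `P.chain.X`, so that it can be rewritten with. -/
theorem NegHom.natural {P Q : NegObj R} (f : P ⟶ Q) {i j : Fin (P.n + 1)} (h : i ≤ j) :
    P.X.map (homOfLE h) ≫ f.1.θ j = f.1.θ i ≫ Q.X.map (homOfLE (f.1.α.monotone h)) :=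
  f.1.natural h

/-- Naturality makes `X(i ≤ j) ≫ θⱼ` a Reedy factorization of `θᵢ` when `α i = α j`. -/
theorem isIdMor_map_of_α_eq {P Q : NegObj R} (f : P ⟶ Q) {i j : Fin (P.n + 1)} (hij : i ≤ j)
    (h : f.1.α i = f.1.α j) : IsIdMor (P.X.map (homOfLE hij)) := by
  have w : P.X.map (homOfLE hij) ≫ f.1.θ j = f.1.θ i ≫ eqToHom (congrArg Q.X.obj h) := by
    rw [NegHom.natural, map_homOfLE_eq_eqToHom Q.X _ h]
    rfl
  exact R.isIdMor_of_comp_eq_pos (P.negMap hij) (f.2 j)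
    (R.pos_comp _ _ (f.2 i) (R.pos_of_isIdMor ⟨_, rfl⟩)) w

section GammaNeg

variable {P M M' Q : NegObj R}

theorem gammaNeg_id (P : NegObj R) : GammaNeg R (𝟙 P) :=
  ⟨fun a => ⟨a, rfl⟩, fun _ => isIdMor_id _⟩

theorem GammaNeg.map_heq {g : P ⟶ M} (hg : GammaNeg R g) {i j : Fin (P.n + 1)} (hij : i ≤ j)
    {a b : Fin (M.n + 1)} (ha : g.1.α i = a) (hb : g.1.α j = b) (u : a ⟶ b) :
    M.X.map u ≍ P.X.map (homOfLE hij) := by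
  subst ha hb
  obtain ⟨ei, hi⟩ := hg.2 i
  obtain ⟨ej, hj⟩ := hg.2 j
  have w := NegHom.natural g hij
  rw [hi, hj] at w
  rw [Subsingleton.elim u (homOfLE (g.1.α.monotone hij))]
  exact (eqToHom_comp_heq _ ei).symm.trans ((heq_of_eq w).symm.trans (comp_eqToHom_heq _ ej))

theorem sigma_eq_of_gammaNeg {g : P ⟶ M} {g' : P ⟶ M'} (hg : GammaNeg R g)
    (hg' : GammaNeg R g') (hn : M.n = M'.n) (hα : ∀ i, (g.1.α i : ℕ) = g'.1.α i) :
    (⟨M, g⟩ : Σ M, P ⟶ M) = ⟨M', g'⟩ := by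
  obtain ⟨m, X, hX⟩ := M
  obtain ⟨m', X', hX'⟩ := M'
  obtain rfl : m = m' := hn
  have hα' : g.1.α = g'.1.α := OrderHom.ext _ _ (funext fun i => Fin.ext (hα i))
  obtain rfl : X = X' := by
    refine Functor.hext (fun a => ?_) (fun a b u => ?_)
    · obtain ⟨i, rfl⟩ := hg.1 a
      exact (hg.2 i).1.symm.trans
        ((hg'.2 i).1.trans (congrArg X'.obj (DFunLike.congr_fun hα' i).symm))
    · obtain ⟨i, j, hij, ha, hb⟩ := g.1.α.monotone.exists_le_of_surjective hg.1 (leOfHom u)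
      exact (hg.map_heq hij ha hb u).trans (hg'.map_heq hij (hα' ▸ ha) (hα' ▸ hb) u).symm
  obtain rfl : g = g' :=
    Subtype.ext (ChainHom.ext_heq hα' fun i => heq_of_isIdMor (hg.2 i) (hg'.2 i))
  rfl

theorem GammaNeg.cancel {g : P ⟶ M} (hg : GammaNeg R g) {h h' : M ⟶ Q} (w : g ≫ h = g ≫ h') :
    h = h' := by
  have w₁ : (g ≫ h).1 = (g ≫ h').1 := congrArg Subtype.val w
  have hα : h.1.α = h'.1.α := OrderHom.ext _ _ (funext fun a => by
    obtain ⟨i, rfl⟩ := hg.1 a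
    exact congrArg (fun c : ChainHom _ _ => c.α i) w₁)
  refine Subtype.ext (ChainHom.ext_heq hα fun a => ?_)
  obtain ⟨i, rfl⟩ := hg.1 a
  obtain ⟨e, he⟩ := hg.2 i
  have hθ := ChainHom.congr_θ w₁ i
  change g.1.θ i ≫ h.1.θ _ ≍ g.1.θ i ≫ h'.1.θ _ at hθ
  rw [he] at hθ
  exact (eqToHom_comp_heq _ e).symm.trans (hθ.trans (eqToHom_comp_heq _ e))

theorem GammaNeg.isIdMor_of_n_eq {f : P ⟶ Q} (hf : GammaNeg R f) (hn : P.n = Q.n) :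
    IsIdMor f := by
  obtain ⟨n, X, hX⟩ := P
  obtain ⟨m, Y, hY⟩ := Q
  obtain rfl : n = m := hn
  have hα := OrderHom.eq_id_of_injective _ (Finite.injective_iff_surjective.mpr hf.1)
  exact isIdMor_of_sigma_eq
    (sigma_eq_of_gammaNeg hf (gammaNeg_id _) rfl fun i => by rw [hα]; rfl)

end GammaNeg

section Factorization

variable {P Q : NegObj R} {k : ℕ}

def NegObj.restrict (P : NegObj R) (s : Fin (k + 1) →o Fin (P.n + 1)) : NegObj R where
  n := k
  X := s.monotone.functor ⋙ P.X
  negMap h := P.negMap (s.monotone h)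

def NegObj.restrictHom (P : NegObj R) (s : Fin (k + 1) →o Fin (P.n + 1)) :
    P.restrict s ⟶ P :=
  ⟨⟨s, fun _ => 𝟙 _, fun _ => (Category.comp_id _).trans (Category.id_comp _).symm⟩,
    fun _ => R.pos_id _⟩

def NegObj.toRestrict (P : NegObj R) (s : Fin (k + 1) →o Fin (P.n + 1))
    (σ : Fin (P.n + 1) →o Fin (k + 1)) (hle : ∀ i, i ≤ s (σ i))
    (hid : ∀ i, IsIdMor (P.X.map (homOfLE (hle i)))) : P ⟶ P.restrict s :=
  ⟨⟨σ, fun i => P.X.map (homOfLE (hle i)), fun {i j : Fin (P.n + 1)} hij => by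
    change P.X.map (homOfLE hij) ≫ P.X.map (homOfLE (hle j)) =
      P.X.map (homOfLE (hle i)) ≫ P.X.map (homOfLE (s.monotone (σ.monotone hij)))
    rw [← P.X.map_comp, ← P.X.map_comp]
    exact congrArg P.X.map (Subsingleton.elim _ _)⟩, fun i => R.pos_of_isIdMor (hid i)⟩

theorem exists_gamma_factorization (f : P ⟶ Q) :
    ∃ t : Σ M : NegObj R, (P ⟶ M) × (M ⟶ Q),
      GammaNeg R t.2.1 ∧ GammaPos R t.2.2 ∧ t.2.1 ≫ t.2.2 = f := by
  obtain ⟨k, σ, s, hle, hσs, hfibre, hinj⟩ := f.1.α.exists_image_factorization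
  have hid : ∀ i, IsIdMor (P.X.map (homOfLE (hle i))) :=
    fun i => isIdMor_map_of_α_eq f (hle i) (hfibre i).symm
  let g := P.toRestrict s σ hle hid
  have hg : NegHom.le (𝟙 P) (g ≫ P.restrictHom s) := by
    refine ⟨hle, fun i _ => ?_⟩
    change P.X.map (homOfLE (hle i)) ≫ 𝟙 _ = 𝟙 _ ≫ P.X.map (homOfLE _)
    simp
  refine ⟨⟨P.restrict s, g, P.restrictHom s ≫ f⟩, ⟨fun a => ⟨s a, hσs a⟩, hid⟩, hinj, ?_⟩
  have := NegHom.eq_of_le (NegHom.le_comp_right f hg) fun i => (hfibre i).symm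
  rwa [Category.id_comp, Category.assoc, eq_comm] at this

theorem gamma_factorization_unique {M M' : NegObj R} {g : P ⟶ M} {h : M ⟶ Q} {g' : P ⟶ M'}
    {h' : M' ⟶ Q} (hg : GammaNeg R g) (hh : GammaPos R h) (hg' : GammaNeg R g')
    (hh' : GammaPos R h') (w : g ≫ h = g' ≫ h') :
    (⟨M, g, h⟩ : Σ M : NegObj R, (P ⟶ M) × (M ⟶ Q)) = ⟨M', g', h'⟩ := by
  obtain ⟨hn, hσ⟩ := Fin.eq_of_surjective_comp_injective hg.1 hg'.1 hh hh'
    fun i => congrArg (fun c : P ⟶ Q => c.1.α i) w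
  obtain ⟨rfl, hgg'⟩ :=
    Sigma.mk.inj_iff.mp (sigma_eq_of_gammaNeg hg hg' (Nat.succ_injective hn) hσ)
  obtain rfl := eq_of_heq hgg'
  obtain rfl := hg.cancel w
  rfl

end Factorization

section WellFounded

/-- The relation `<'` on the objects of `C`. -/
def ReedyStruct.Precedes (R : ReedyStruct C) (x y : C) : Prop :=
  (∃ f : x ⟶ y, R.pos f ∧ ¬ IsIdMor f) ∨ (∃ f : y ⟶ x, R.neg f ∧ ¬ IsIdMor f)

def ChainLT (R : ReedyStruct C) (v w : Σ' k : ℕ, Fin (k + 1) → C) : Prop :=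
  PSigma.Lex (· < ·) (fun _ => Pi.Lex (· < ·) fun {_} => R.Precedes) v w

theorem wellFounded_chainLT (R : ReedyStruct C) : WellFounded (ChainLT R) :=
  WellFounded.psigma_lex wellFounded_lt fun _ => Pi.Lex.wellFounded _ fun _ => R.wf

def NegObj.objects (P : NegObj R) : Σ' k : ℕ, Fin (k + 1) → C := ⟨P.n, fun i => P.X.obj i⟩

variable {P Q : NegObj R}

theorem objects_lt_of_gammaPos (f : P ⟶ Q) (hf : GammaPos R f) (hnid : ¬ IsIdMor f) :
    ChainLT R P.objects Q.objects := by
  obtain ⟨n, X, hX⟩ := P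
  obtain ⟨m, Y, hY⟩ := Q
  have hnm : n ≤ m := Nat.le_of_succ_le_succ (Fin.le_of_injective _ hf)
  obtain hlt | rfl := hnm.lt_or_eq
  · exact PSigma.Lex.left _ _ hlt
  have hα : f.1.α = OrderHom.id := OrderHom.eq_id_of_injective _ hf
  have hθ : ∀ i, ¬ IsIdMor (f.1.θ i) → R.Precedes (X.obj i) (Y.obj i) := fun i h => by
    have : R.Precedes (X.obj i) (Y.obj (f.1.α i)) := Or.inl ⟨f.1.θ i, f.2 i, h⟩
    rwa [hα] at this
  obtain ⟨i, hi⟩ : ∃ i, ¬ IsIdMor (f.1.θ i) := by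
    by_contra! hid
    exact hnid (GammaNeg.isIdMor_of_n_eq ⟨fun a => ⟨a, by rw [hα]; rfl⟩, hid⟩ rfl)
  refine PSigma.Lex.right _ (Pi.lex_of_forall_eq_or (fun j => ?_) fun h => ?_)
  · by_cases hj : IsIdMor (f.1.θ j)
    · exact Or.inl (hj.1.trans (by rw [hα]; rfl))
    · exact Or.inr (hθ j hj)
  · exact R.wf.irrefl.irrefl _ (congrFun h i ▸ hθ i hi)

theorem objects_lt_of_gammaNeg (f : Q ⟶ P) (hf : GammaNeg R f) (hnid : ¬ IsIdMor f) :
    ChainLT R P.objects Q.objects := by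
  have hnm : P.n ≤ Q.n := Nat.le_of_succ_le_succ (Fin.le_of_surjective _ hf.1)
  obtain hlt | heq := hnm.lt_or_eq
  · exact PSigma.Lex.left _ _ hlt
  · exact absurd (hf.isIdMor_of_n_eq heq.symm) hnid

end WellFounded

section Statements

variable (R : ReedyStruct C)

theorem statement10 :
    (∀ {P Q : NegObj R} (f : P ⟶ Q),
      ∃! t : Σ M : NegObj R, (P ⟶ M) × (M ⟶ Q),
        GammaNeg R t.2.1 ∧ GammaPos R t.2.2 ∧ t.2.1 ≫ t.2.2 = f) ∧
    WellFounded (fun P Q : NegObj R =>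
      (∃ f : P ⟶ Q, GammaPos R f ∧ ¬ IsIdMor f) ∨
      (∃ f : Q ⟶ P, GammaNeg R f ∧ ¬ IsIdMor f)) := by
  refine ⟨fun f => ?_, ?_⟩
  · obtain ⟨⟨M, g, h⟩, hg, hh, w⟩ := exists_gamma_factorization f
    refine ⟨⟨M, g, h⟩, ⟨hg, hh, w⟩, ?_⟩
    rintro ⟨M', g', h'⟩ ⟨hg', hh', w'⟩
    exact gamma_factorization_unique hg' hh' hg hh (w'.trans w.symm)
  · refine Subrelation.wf ?_ (InvImage.wf NegObj.objects (wellFounded_chainLT R))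
    rintro P Q (⟨f, hf, hnid⟩ | ⟨f, hf, hnid⟩)
    exacts [objects_lt_of_gammaPos f hf hnid, objects_lt_of_gammaNeg f hf hnid]

end Statements

end ReedyPaper
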